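/- arXiv:1708.05490 — 3 statements merged into one kernel-verified Lean document; each statement's English description precedes it below -/
import Mathlib

section
/- Let C be an [n,k] linear code over F_p (p prime) with generator matrix in standard form G = (I_k | M), g_{ij} its entries. For 1 ≤ i ≤ k let m_i = (0,...,0, p−g_{i,k+1},..., p−g_{i,n}). Then under the translation of coordinates X_i ↦ X_i + 1, the code ideal I_C = ⟨X^c − X^{c'} : c − c' ∈ C⟩ + ⟨X_i^p − 1 : 1 ≤ i ≤ n⟩ is carried to the ideal I_C' = ⟨(X_i+1) + (p−1)·∏_{j ∈ supp(m_i)} (X_j+1)^{p−g_{i,j}} : 1 ≤ i ≤ k⟩ + ⟨(X_i+1)^p + (p−1) : k+1 ≤ i ≤ n⟩ in F_p[X]. -/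
open MvPolynomial

noncomputable section

/-- The exponent vector of a word `c ∈ F_p^n`, viewing entries as integers. -/
def toExp {p n : ℕ} (c : Fin n → ZMod p) : Fin n →₀ ℕ :=
  Finsupp.equivFunOnFinite.symm fun i => (c i).val

/-- The code generated by the rows of `G`. -/
def code {p n k : ℕ} (G : Fin k → Fin n → ZMod p) : Submodule (ZMod p) (Fin n → ZMod p) :=
  Submodule.span (ZMod p) (Set.range G)

/-- The code ideal `I_C = ⟨X^c - X^{c'} : c - c' ∈ C⟩ + ⟨X_i^p - 1 : 1 ≤ i ≤ n⟩`. -/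
def codeIdeal (p n k : ℕ) (G : Fin k → Fin n → ZMod p) :
    Ideal (MvPolynomial (Fin n) (ZMod p)) :=
  Ideal.span
    ({f | ∃ c c' : Fin n → ZMod p, c - c' ∈ code G ∧
        f = monomial (toExp c) 1 - monomial (toExp c') 1} ∪
      {f | ∃ i : Fin n, f = X i ^ p - 1})

/-- `supp(m_i)`, the set of columns `j > k` with `g_{ij} ≠ 0`. -/
def suppM {p n k : ℕ} (G : Fin k → Fin n → ZMod p) (i : Fin k) : Finset (Fin n) :=
  Finset.univ.filter fun j => k ≤ (j : ℕ) ∧ G i j ≠ 0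

/-- The translated code ideal
`I_C' = ⟨(X_i+1) + (p-1)∏_{j∈supp(m_i)}(X_j+1)^{p-g_{ij}}⟩ + ⟨(X_i+1)^p + (p-1)⟩`. -/
def codeIdeal' (p n k : ℕ) (hkn : k ≤ n) (G : Fin k → Fin n → ZMod p) :
    Ideal (MvPolynomial (Fin n) (ZMod p)) :=
  Ideal.span
    ({f | ∃ i : Fin k, f = (X (Fin.castLE hkn i) + 1) +
        C ((p : ZMod p) - 1) * ∏ j ∈ suppM G i, (X j + 1) ^ (p - (G i j).val)} ∪
      {f | ∃ i : Fin n, k ≤ (i : ℕ) ∧ f = (X i + 1) ^ p + C ((p : ZMod p) - 1)})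

/-!
Let `J` be the ideal generated by the binomials `X_i - X^{m_i}` (`i < k`) and `X_j^p - 1`
(`j ≥ k`). Modulo `J` every variable satisfies `X_j^p = 1` (for `j < k` because `X^{m_i}` only
involves variables `X_j` with `j ≥ k`), so `c ↦ X^c` is a character of `F_p^n`. It is trivial on
the rows `G i = e_i - m_i`, hence on the whole code, so every binomial `X^c - X^{c'}` with
`c - c' ∈ C` lies in `J`; therefore `I_C = J`. The translation `X_i ↦ X_i + 1` sends the
generators of `J` to those of `I_C'`, because `p - 1 = -1` in `F_p`.
-/

section PowVal

variable {M : Type*} [Monoid M] {p : ℕ}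

lemma pow_val_add_of_pow_eq_one [NeZero p] {a : M} (ha : a ^ p = 1) (x y : ZMod p) :
    a ^ (x + y).val = a ^ x.val * a ^ y.val := by
  rw [ZMod.val_add, ← pow_eq_pow_mod _ ha, pow_add]

lemma pow_val_mul_of_pow_eq_one {a : M} (ha : a ^ p = 1) (x y : ZMod p) :
    a ^ (x * y).val = (a ^ y.val) ^ x.val := by
  rw [ZMod.val_mul, ← pow_eq_pow_mod _ ha, ← pow_mul, mul_comm]

end PowVal

section ProdPowVal

variable {M : Type*} [CommMonoid M] {ι : Type*} [Fintype ι] {p : ℕ}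

def prodPowVal (u : ι → M) (c : ι → ZMod p) : M :=
  ∏ j, u j ^ (c j).val

lemma prodPowVal_zero (u : ι → M) : prodPowVal u (0 : ι → ZMod p) = 1 := by
  simp [prodPowVal]

lemma prodPowVal_single [DecidableEq ι] [Fact (1 < p)] (u : ι → M) (i : ι) :
    prodPowVal u (Pi.single i (1 : ZMod p)) = u i := by
  rw [prodPowVal, Finset.prod_eq_single i (fun j _ hj => by simp [hj]) (by simp)]
  simp [ZMod.val_one]

lemma prodPowVal_add [NeZero p] {u : ι → M} (hu : ∀ j, u j ^ p = 1) (c c' : ι → ZMod p) :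
    prodPowVal u (c + c') = prodPowVal u c * prodPowVal u c' := by
  simp only [prodPowVal, Pi.add_apply, pow_val_add_of_pow_eq_one (hu _), Finset.prod_mul_distrib]

lemma prodPowVal_smul {u : ι → M} (hu : ∀ j, u j ^ p = 1) (a : ZMod p) (c : ι → ZMod p) :
    prodPowVal u (a • c) = prodPowVal u c ^ a.val := by
  simp only [prodPowVal, Pi.smul_apply, smul_eq_mul, pow_val_mul_of_pow_eq_one (hu _),
    Finset.prod_pow]

lemma map_prodPowVal {N F : Type*} [CommMonoid N] [FunLike F M N] [MonoidHomClass F M N] (f : F)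
    (u : ι → M) (c : ι → ZMod p) : f (prodPowVal u c) = prodPowVal (fun j => f (u j)) c := by
  simp only [prodPowVal, map_prod, map_pow]

lemma prodPowVal_eq_of_sub_mem_span [NeZero p] {u : ι → M} (hu : ∀ j, u j ^ p = 1)
    {S : Set (ι → ZMod p)} (hS : ∀ v ∈ S, prodPowVal u v = 1) {c c' : ι → ZMod p}
    (hc : c - c' ∈ Submodule.span (ZMod p) S) : prodPowVal u c = prodPowVal u c' := by
  have hspan : ∀ v ∈ Submodule.span (ZMod p) S, prodPowVal u v = 1 := fun v hv => by
    induction hv using Submodule.span_induction with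
    | mem v hv => exact hS v hv
    | zero => exact prodPowVal_zero u
    | add x y _ _ hx hy => rw [prodPowVal_add hu, hx, hy, one_mul]
    | smul a x _ hx => rw [prodPowVal_smul hu, hx, one_pow]
  rw [← sub_add_cancel c c', prodPowVal_add hu, hspan _ hc, one_mul]

end ProdPowVal

lemma monomial_toExp {p n : ℕ} {R : Type*} [CommSemiring R] (c : Fin n → ZMod p) :
    (monomial (toExp c) 1 : MvPolynomial (Fin n) R) = prodPowVal X c := by
  rw [← aeval_X_left_apply (monomial (toExp c) 1), aeval_monomial, map_one, one_mul,
    Finsupp.prod_pow]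
  rfl

section StandardForm

variable {p n k : ℕ} (hkn : k ≤ n) (G : Fin k → Fin n → ZMod p)

/-- The paper's `m_i`: the word `e_i - G i`, i.e. `p - g_{ij}` in the columns `j ≥ k`. -/
def parityWord (i : Fin k) : Fin n → ZMod p :=
  Pi.single (Fin.castLE hkn i) 1 - G i

lemma single_sub_parityWord (i : Fin k) :
    Pi.single (Fin.castLE hkn i) 1 - parityWord hkn G i = G i :=
  sub_sub_cancel _ _

variable {hkn G}

lemma val_parityWord [NeZero p]
    (hstd : ∀ i j : Fin k, G i (Fin.castLE hkn j) = if i = j then 1 else 0) (i : Fin k)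
    (j : Fin n) :
    (parityWord hkn G i j).val = if j ∈ suppM G i then p - (G i j).val else 0 := by
  simp only [parityWord, suppM, Finset.mem_filter, Finset.mem_univ, true_and, Pi.sub_apply]
  by_cases hjk : k ≤ (j : ℕ)
  · have hj : j ≠ Fin.castLE hkn i := by
      rintro rfl
      exact absurd i.isLt (not_lt.2 (by simpa using hjk))
    rw [Pi.single_eq_of_ne hj, zero_sub, ZMod.neg_val]
    by_cases hg : G i j = 0 <;> simp [hg, hjk]
  · obtain ⟨j, rfl⟩ : ∃ j' : Fin k, Fin.castLE hkn j' = j := ⟨⟨j, by omega⟩, rfl⟩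
    simp only [hjk, false_and, if_false, hstd]
    by_cases hij : i = j <;> simp [hij]

lemma prodPowVal_parityWord [NeZero p] {M : Type*} [CommMonoid M]
    (hstd : ∀ i j : Fin k, G i (Fin.castLE hkn j) = if i = j then 1 else 0) (u : Fin n → M)
    (i : Fin k) :
    prodPowVal u (parityWord hkn G i) = ∏ j ∈ suppM G i, u j ^ (p - (G i j).val) := by
  rw [suppM, Finset.prod_filter]
  refine Finset.prod_congr rfl fun j _ => ?_
  rw [val_parityWord hstd]
  split_ifs with h <;> simp_all [suppM]

end StandardForm

/-- The paper's reduced Gröbner basis `{X_i - X^{m_i} : i < k} ∪ {X_i^p - 1 : i ≥ k}` of `I_C`. -/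
def codeIdealGens (p n k : ℕ) (hkn : k ≤ n) (G : Fin k → Fin n → ZMod p) :
    Set (MvPolynomial (Fin n) (ZMod p)) :=
  {f | ∃ i : Fin k, f = X (Fin.castLE hkn i) - ∏ j ∈ suppM G i, X j ^ (p - (G i j).val)} ∪
    {f | ∃ i : Fin n, k ≤ (i : ℕ) ∧ f = X i ^ p - 1}

lemma codeIdeal_eq_span_codeIdealGens {p n k : ℕ} [Fact (1 < p)] (hkn : k ≤ n)
    (G : Fin k → Fin n → ZMod p)
    (hstd : ∀ i j : Fin k, G i (Fin.castLE hkn j) = if i = j then 1 else 0) :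
    codeIdeal p n k G = Ideal.span (codeIdealGens p n k hkn G) := by
  set J := Ideal.span (codeIdealGens p n k hkn G)
  set u : Fin n → MvPolynomial (Fin n) (ZMod p) ⧸ J := fun j => Ideal.Quotient.mk J (X j)
  have hgen : ∀ {f}, f ∈ codeIdealGens p n k hkn G → Ideal.Quotient.mk J f = 0 := fun hf =>
    Ideal.Quotient.eq_zero_iff_mem.2 (Ideal.subset_span hf)
  have hu_high : ∀ j : Fin n, k ≤ (j : ℕ) → u j ^ p = 1 := fun j hj => by
    simpa [sub_eq_zero] using hgen (Or.inr ⟨j, hj, rfl⟩)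
  have hu_low : ∀ i : Fin k, u (Fin.castLE hkn i) = prodPowVal u (parityWord hkn G i) :=
    fun i => by
      rw [prodPowVal_parityWord hstd]
      simpa [sub_eq_zero, map_prod] using hgen (Or.inl ⟨i, rfl⟩)
  have hu : ∀ j, u j ^ p = 1 := by
    intro j
    by_cases hj : k ≤ (j : ℕ)
    · exact hu_high j hj
    · obtain ⟨j, rfl⟩ : ∃ j' : Fin k, Fin.castLE hkn j' = j := ⟨⟨j, by omega⟩, rfl⟩
      rw [hu_low, prodPowVal_parityWord hstd, ← Finset.prod_pow]
      refine Finset.prod_eq_one fun l hl => ?_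
      rw [← pow_mul, mul_comm, pow_mul, hu_high l (Finset.mem_filter.1 hl).2.1, one_pow]
  have hrow : ∀ i : Fin k, prodPowVal u (G i) = 1 := fun i => by
    rw [← single_sub_parityWord hkn G i, sub_eq_add_neg, prodPowVal_add hu, prodPowVal_single,
      hu_low, ← prodPowVal_add hu, add_neg_cancel, prodPowVal_zero]
  apply le_antisymm
  · refine Ideal.span_le.2 ?_
    rintro f (⟨c, c', hcc', rfl⟩ | ⟨j, rfl⟩) <;>
      rw [SetLike.mem_coe, ← Ideal.Quotient.eq_zero_iff_mem]
    · rw [map_sub, sub_eq_zero, monomial_toExp, monomial_toExp, map_prodPowVal, map_prodPowVal]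
      exact prodPowVal_eq_of_sub_mem_span hu (by rintro _ ⟨i, rfl⟩; exact hrow i) hcc'
    · simpa [sub_eq_zero] using hu j
  · refine Ideal.span_le.2 ?_
    rintro f (⟨i, rfl⟩ | ⟨j, -, rfl⟩) <;> refine Ideal.subset_span ?_
    · refine Or.inl ⟨Pi.single (Fin.castLE hkn i) 1, parityWord hkn G i, ?_, ?_⟩
      · rw [single_sub_parityWord]
        exact Submodule.subset_span ⟨i, rfl⟩
      · rw [monomial_toExp, monomial_toExp, prodPowVal_single, prodPowVal_parityWord hstd]
    · exact Or.inr ⟨j, rfl⟩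

lemma map_translate_span_codeIdealGens {p n k : ℕ} (hkn : k ≤ n) (G : Fin k → Fin n → ZMod p) :
    Ideal.map (aeval fun i : Fin n => X i + 1 :
        MvPolynomial (Fin n) (ZMod p) →ₐ[ZMod p] MvPolynomial (Fin n) (ZMod p))
      (Ideal.span (codeIdealGens p n k hkn G)) = codeIdeal' p n k hkn G := by
  rw [Ideal.map_span, codeIdeal', codeIdealGens, Set.image_union]
  congr 1
  ext f
  simp [map_prod, sub_eq_add_neg, eq_comm]

/-- The translation `X_i ↦ X_i + 1` carries the code ideal `I_C` to `I_C'`. -/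
theorem translated_code_ideal (p n k : ℕ) [Fact p.Prime] (hkn : k ≤ n)
    (G : Fin k → Fin n → ZMod p)
    (hstd : ∀ i j : Fin k, G i (Fin.castLE hkn j) = if i = j then 1 else 0) :
    Ideal.map
        (MvPolynomial.aeval (fun i : Fin n => X i + 1) :
          MvPolynomial (Fin n) (ZMod p) →ₐ[ZMod p] MvPolynomial (Fin n) (ZMod p))
        (codeIdeal p n k G)
      = codeIdeal' p n k hkn G := by
  rw [codeIdeal_eq_span_codeIdealGens hkn G hstd, map_translate_span_codeIdealGens]

end
end

section
/- Let C be an [n,k] code over F_p (p prime) with generator matrix G = (I_k|M). Under the negative degree lexicographic (local) order > on F_p[X], the set S = { X_i − ∑_{(t_1,...,t_{σ_i}) ≠ 0} ∏_{h=1}^{σ_i} C(p−g_{i,j_h}, t_h) X_{j_h}^{t_h} : 1 ≤ i ≤ k } ∪ { X_i^p : k+1 ≤ i ≤ n } is a standard basis of the ideal I = I_C' · Loc_>(F_p[X]) in the localization Loc_>(F_p[X]); in particular the leading-term ideal of I is generated by {X_1,...,X_k, X_{k+1}^p,...,X_n^p}. -/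
/-!
The substitution `X_i ↦ ∏_{j ∈ supp(m_i)} (X_j + 1)^{p - g_{ij}} - 1` for `i ≤ k`, `X_j ↦ X_j` for
`j > k` kills every `A_i` and fixes every `X_j^p`, so it maps `I_C'` into `⟨X_{k+1}^p, …, X_n^p⟩`.
It has no constant terms, so it never lowers degrees; for the local order this means that a
leading monomial of an element of `I_C'` that avoids `X_1, …, X_k` survives the substitution and
is therefore divisible by some `X_j^p`. Units of `Loc_>` do not change leading monomials, so the
same holds throughout `I`, while `A_i` and `X_j^p` have leading monomials `X_i` and `X_j^p`.
-/

open MvPolynomial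

noncomputable section

def eExp (p n k : ℕ) (G : Fin k → Fin n → ZMod p) (i : Fin k) (j : Fin n) : ℕ :=
  if k ≤ (j : ℕ) ∧ G i j ≠ 0 then p - (G i j).val else 0

/-- The standard-basis element
`A_i = X_i - ∑_{(t) ≠ 0} ∏_h C(p - g_{i,j_h}, t_h) X_{j_h}^{t_h}`. -/
def stdElt (p n k : ℕ) (hkn : k ≤ n) (G : Fin k → Fin n → ZMod p) (i : Fin k) :
    MvPolynomial (Fin n) (ZMod p) :=
  X (Fin.castLE hkn i) -
    ∑ t ∈ (Fintype.piFinset fun j : Fin n => Finset.range (eExp p n k G i j + 1)).filter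
        (fun t => t ≠ fun _ => 0),
      ∏ j ∈ suppM G i, C (((eExp p n k G i j).choose (t j) : ZMod p)) * X j ^ t j

/-- Lexicographic order with `X_1 > ... > X_n`. -/
def lexGt {n : ℕ} (a b : Fin n →₀ ℕ) : Prop :=
  ∃ i : Fin n, (∀ j, j < i → a j = b j) ∧ b i < a i

/-- Negative degree lexicographic order (a local order): smaller total degree is larger,
ties broken lexicographically. -/
def negDegLexGt {n : ℕ} (a b : Fin n →₀ ℕ) : Prop :=
  (∑ j, a j) < (∑ j, b j) ∨ ((∑ j, a j) = (∑ j, b j) ∧ lexGt a b)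

def IsLeadMon {σ : Type*} {K : Type*} [CommSemiring K]
    (r : (σ →₀ ℕ) → (σ →₀ ℕ) → Prop) (f : MvPolynomial σ K) (α : σ →₀ ℕ) : Prop :=
  α ∈ f.support ∧ ∀ β ∈ f.support, β ≠ α → r α β

/-- The multiplicative set `S_>` of polynomials with constant term `1`;
`Loc_>(F_p[X]) = S_>⁻¹ F_p[X]`. -/
def unitSet (n : ℕ) (K : Type*) [CommSemiring K] : Submonoid (MvPolynomial (Fin n) K) :=
  Submonoid.comap
    (constantCoeff : MvPolynomial (Fin n) K →+* K).toMonoidHom (⊥ : Submonoid K)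

/-- Leading terms (w.r.t. negative degree lex) of the members of `S`. -/
def LTset {n : ℕ} {K : Type*} [CommSemiring K] (S : Set (MvPolynomial (Fin n) K)) :
    Set (MvPolynomial (Fin n) K) :=
  {m | ∃ f ∈ S, ∃ α, IsLeadMon negDegLexGt f α ∧ m = monomial α (f.coeff α)}

section IdealOfVars

variable {σ R : Type*} [CommSemiring R]

theorem mem_idealOfVars_of_constantCoeff_eq_zero {q : MvPolynomial σ R}
    (hq : constantCoeff q = 0) : q ∈ idealOfVars σ R := by
  rw [← pow_one (idealOfVars σ R), mem_pow_idealOfVars_iff]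
  intro β hβ
  refine Nat.one_le_iff_ne_zero.2 fun h => mem_support_iff.1 hβ ?_
  rwa [(Finsupp.degree_eq_zero_iff β).1 h, ← constantCoeff_eq]

theorem monomial_mem_pow_idealOfVars_degree (β : σ →₀ ℕ) (c : R) :
    monomial β c ∈ idealOfVars σ R ^ β.degree := by
  classical
  refine (mem_pow_idealOfVars_iff _ _).2 fun γ hγ => ?_
  rw [Finset.mem_singleton.1 (support_monomial_subset hγ)]

theorem aeval_mem_pow_idealOfVars {F : σ → MvPolynomial σ R} (hF : ∀ v, F v ∈ idealOfVars σ R)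
    {d : ℕ} {g : MvPolynomial σ R} (hg : g ∈ idealOfVars σ R ^ d) :
    aeval F g ∈ idealOfVars σ R ^ d := by
  have hmap : (idealOfVars σ R).map (aeval (R := R) F) ≤ idealOfVars σ R := by
    rw [Ideal.map_span, Ideal.span_le]
    rintro _ ⟨_, ⟨v, rfl⟩, rfl⟩
    simpa using hF v
  have hmem : aeval F g ∈ (idealOfVars σ R).map (aeval (R := R) F) ^ d := by
    rw [← Ideal.map_pow]
    exact Ideal.mem_map_of_mem _ hg
  exact Ideal.pow_right_mono hmap d hmem

theorem aeval_monomial_of_eq_X {F : σ → MvPolynomial σ R} {β : σ →₀ ℕ}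
    (h : ∀ v ∈ β.support, F v = X v) (c : R) : aeval F (monomial β c) = monomial β c := by
  rw [aeval_monomial, monomial_eq, algebraMap_eq]
  exact congrArg _ (Finsupp.prod_congr fun v hv => by rw [h v hv])

/-- Monomials of degree above `degree α` cannot reach `α` under a substitution without constant
terms, and those of degree `degree α` are left alone. -/
theorem coeff_aeval_eq_coeff {F : σ → MvPolynomial σ R} (hF : ∀ v, F v ∈ idealOfVars σ R)
    {g : MvPolynomial σ R} {α : σ →₀ ℕ} (hmin : ∀ β ∈ g.support, α.degree ≤ β.degree)
    (hfix : ∀ β ∈ g.support, β.degree = α.degree → ∀ v ∈ β.support, F v = X v) :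
    coeff α (aeval F g) = coeff α g := by
  classical
  conv_lhs => rw [← support_sum_monomial_coeff g]
  conv_rhs => rw [← support_sum_monomial_coeff g]
  rw [map_sum, coeff_sum, coeff_sum]
  refine Finset.sum_congr rfl fun β hβ => ?_
  rcases (hmin β hβ).eq_or_lt with hdeg | hdeg
  · rw [aeval_monomial_of_eq_X (hfix β hβ hdeg.symm)]
  · have hmem := aeval_mem_pow_idealOfVars hF (monomial_mem_pow_idealOfVars_degree β (coeff β g))
    rw [(mem_pow_idealOfVars_iff' _ _).1 hmem α hdeg, coeff_monomial,
      if_neg (by rintro rfl; exact hdeg.ne rfl)]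

end IdealOfVars

theorem isLeadMon_monomial {σ K : Type*} [CommSemiring K] {r : (σ →₀ ℕ) → (σ →₀ ℕ) → Prop}
    {α : σ →₀ ℕ} {c : K} (hc : c ≠ 0) : IsLeadMon r (monomial α c) α := by
  classical
  refine ⟨by simp [support_monomial, hc], fun β hβ hne => absurd ?_ hne⟩
  simpa [support_monomial, hc] using hβ

section LocalOrder

variable {n : ℕ} {K : Type*}

theorem negDegLexGt_of_degree_lt {a b : Fin n →₀ ℕ} (h : a.degree < b.degree) :
    negDegLexGt a b := by
  rw [Finsupp.degree_eq_sum, Finsupp.degree_eq_sum] at h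
  exact Or.inl h

theorem lexGt.eq_zero_of_lt {a b : Fin n →₀ ℕ} (h : lexGt a b) {k : ℕ}
    (ha : ∀ v : Fin n, (v : ℕ) < k → a v = 0) (v : Fin n) (hv : (v : ℕ) < k) : b v = 0 := by
  obtain ⟨w, hbefore, hw⟩ := h
  rcases lt_or_ge v w with hvw | hwv
  · rw [← hbefore v hvw, ha v hv]
  · have := ha w (lt_of_le_of_lt (Fin.le_def.1 hwv) hv)
    omega

section Semiring

variable [CommSemiring K] {f : MvPolynomial (Fin n) K} {α : Fin n →₀ ℕ}

theorem LTset_subset_LTset {S T : Set (MvPolynomial (Fin n) K)} (h : ∀ f ∈ S, f ≠ 0 → f ∈ T) :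
    LTset S ⊆ LTset T := by
  rintro m ⟨f, hf, α, hα, rfl⟩
  refine ⟨f, h f hf ?_, α, hα, rfl⟩
  rintro rfl
  simpa using hα.1

theorem IsLeadMon.degree_le (h : IsLeadMon negDegLexGt f α) {β : Fin n →₀ ℕ}
    (hβ : β ∈ f.support) : α.degree ≤ β.degree := by
  rcases eq_or_ne β α with rfl | hne
  · exact le_rfl
  · rw [Finsupp.degree_eq_sum, Finsupp.degree_eq_sum]
    rcases h.2 β hβ hne with hlt | ⟨heq, -⟩ <;> omega

theorem IsLeadMon.mem_pow_idealOfVars (h : IsLeadMon negDegLexGt f α) :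
    f ∈ idealOfVars (Fin n) K ^ α.degree :=
  (mem_pow_idealOfVars_iff _ _).2 fun _ hβ => h.degree_le hβ

theorem IsLeadMon.eq_zero_of_degree_eq (h : IsLeadMon negDegLexGt f α) {k : ℕ}
    (hα : ∀ v : Fin n, (v : ℕ) < k → α v = 0) {β : Fin n →₀ ℕ} (hβ : β ∈ f.support)
    (hdeg : β.degree = α.degree) (v : Fin n) (hv : (v : ℕ) < k) : β v = 0 := by
  rcases eq_or_ne β α with rfl | hne
  · exact hα v hv
  · rcases h.2 β hβ hne with hlt | ⟨-, hlex⟩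
    · rw [Finsupp.degree_eq_sum, Finsupp.degree_eq_sum] at hdeg
      omega
    · exact hlex.eq_zero_of_lt hα v hv

theorem IsLeadMon.add_of_mem_pow_idealOfVars (h : IsLeadMon negDegLexGt f α)
    {r : MvPolynomial (Fin n) K} (hr : r ∈ idealOfVars (Fin n) K ^ (α.degree + 1)) :
    IsLeadMon negDegLexGt (f + r) α := by
  classical
  have hrα : coeff α r = 0 := (mem_pow_idealOfVars_iff' _ _).1 hr α (Nat.lt_succ_self _)
  refine ⟨?_, fun β hβ hne => ?_⟩
  · rw [mem_support_iff, coeff_add, hrα, add_zero]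
    exact mem_support_iff.1 h.1
  · rcases Finset.mem_union.1 (support_add hβ) with hf | hr'
    · exact h.2 β hf hne
    · exact negDegLexGt_of_degree_lt ((mem_pow_idealOfVars_iff _ _).1 hr β hr')

theorem constantCoeff_eq_one_of_mem_unitSet {s : MvPolynomial (Fin n) K} (hs : s ∈ unitSet n K) :
    constantCoeff s = 1 :=
  Submonoid.mem_bot.1 (Submonoid.mem_comap.1 hs)

end Semiring

theorem IsLeadMon.mul_of_constantCoeff_eq_one [CommRing K]
    {f s : MvPolynomial (Fin n) K} {α : Fin n →₀ ℕ} (h : IsLeadMon negDegLexGt f α)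
    (hs : constantCoeff s = 1) : IsLeadMon negDegLexGt (s * f) α := by
  have hs1 : s - 1 ∈ idealOfVars (Fin n) K :=
    mem_idealOfVars_of_constantCoeff_eq_zero (by rw [map_sub, hs, map_one, sub_self])
  have hr : (s - 1) * f ∈ idealOfVars (Fin n) K ^ (α.degree + 1) := by
    rw [pow_succ']
    exact Ideal.mul_mem_mul hs1 h.mem_pow_idealOfVars
  convert h.add_of_mem_pow_idealOfVars hr using 1
  ring

theorem isLeadMon_X_sub [CommRing K] [Nontrivial K] {i : Fin n}
    {Q : MvPolynomial (Fin n) K} (hQ : Q ∈ idealOfVars (Fin n) K)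
    (hQi : Q ∈ supported K {v | i < v}) :
    IsLeadMon negDegLexGt (X i - Q) (Finsupp.single i 1) ∧
      coeff (Finsupp.single i 1) (X i - Q) = 1 := by
  classical
  have hvanish : ∀ β ∈ Q.support, ∀ v ≤ i, β v = 0 := by
    intro β hβ v hv
    by_contra hne
    have hvar : v ∈ Q.vars := (mem_vars_iff_mem_support v).2 ⟨β, hβ, Finsupp.mem_support_iff.2 hne⟩
    exact (not_lt_of_ge hv) (mem_supported.1 hQi hvar)
  have hcoeff : coeff (Finsupp.single i 1) (X i - Q) = 1 := by
    rw [coeff_sub, coeff_X, if_pos rfl,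
      notMem_support_iff.1 fun h => by simpa using hvanish _ h i le_rfl, sub_zero]
  refine ⟨⟨by rw [mem_support_iff, hcoeff]; exact one_ne_zero, fun β hβ hne => ?_⟩, hcoeff⟩
  have hβQ : β ∈ Q.support := by
    rcases Finset.mem_union.1 (support_sub _ _ _ hβ) with h | h
    · exact absurd (by simpa [support_X] using h) hne
    · exact h
  have hdeg : 1 ≤ β.degree := (mem_pow_idealOfVars_iff 1 Q).1 (by rwa [pow_one]) β hβQ
  rcases hdeg.lt_or_eq with hlt | heq
  · exact negDegLexGt_of_degree_lt (by rwa [Finsupp.degree_single])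
  · refine Or.inr ⟨?_, i, fun v hv => ?_, ?_⟩
    · rw [← Finsupp.degree_eq_sum, ← Finsupp.degree_eq_sum, Finsupp.degree_single, heq]
    · rw [Finsupp.single_eq_of_ne hv.ne, hvanish β hβQ v hv.le]
    · simp [hvanish β hβQ i le_rfl]

end LocalOrder

theorem prod_X_add_one_pow {σ R : Type*} [Fintype σ] [DecidableEq σ] [CommSemiring R]
    (s : Finset σ) (e : σ → ℕ) (he : ∀ j ∉ s, e j = 0) :
    ∏ j ∈ s, (X j + 1 : MvPolynomial σ R) ^ e j =
      ∑ t ∈ Fintype.piFinset fun j => Finset.range (e j + 1),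
        ∏ j ∈ s, C ((e j).choose (t j) : R) * X j ^ t j := by
  have hbinom : ∀ j, (X j + 1 : MvPolynomial σ R) ^ e j =
      ∑ m ∈ Finset.range (e j + 1), C ((e j).choose m : R) * X j ^ m := fun j => by
    rw [add_pow]
    refine Finset.sum_congr rfl fun m _ => ?_
    rw [one_pow, mul_one, ← map_natCast (C : R →+* MvPolynomial σ R), mul_comm]
  calc ∏ j ∈ s, (X j + 1 : MvPolynomial σ R) ^ e j = ∏ j, (X j + 1) ^ e j :=
        Finset.prod_subset (Finset.subset_univ s) fun j _ hj => by rw [he j hj, pow_zero]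
    _ = ∑ t ∈ Fintype.piFinset fun j => Finset.range (e j + 1),
          ∏ j, C ((e j).choose (t j) : R) * X j ^ t j := by
        simp_rw [hbinom]
        exact Finset.prod_univ_sum _ _
    _ = _ := Finset.sum_congr rfl fun t ht => by
        refine (Finset.prod_subset (Finset.subset_univ s) fun j _ hj => ?_).symm
        have htj := Fintype.mem_piFinset.1 ht j
        rw [he j hj, Finset.range_one, Finset.mem_singleton] at htj
        simp [htj, he j hj]

section RowProd

variable {p n k : ℕ}

theorem mem_suppM {G : Fin k → Fin n → ZMod p} {i : Fin k} {j : Fin n} :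
    j ∈ suppM G i ↔ k ≤ (j : ℕ) ∧ G i j ≠ 0 := by
  simp [suppM]

variable (p n k) in
def rowProd (G : Fin k → Fin n → ZMod p) (i : Fin k) : MvPolynomial (Fin n) (ZMod p) :=
  ∏ j ∈ suppM G i, (X j + 1) ^ (p - (G i j).val)

variable (hkn : k ≤ n) (G : Fin k → Fin n → ZMod p)

theorem stdElt_eq (i : Fin k) :
    stdElt p n k hkn G i = X (Fin.castLE hkn i) - (rowProd p n k G i - 1) := by
  classical
  have hexp : ∀ j ∈ suppM G i, p - (G i j).val = eExp p n k G i j := fun j hj => by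
    rw [eExp, if_pos (mem_suppM.1 hj)]
  have hzero : (fun _ => 0) ∈ Fintype.piFinset fun j => Finset.range (eExp p n k G i j + 1) := by
    simp
  rw [stdElt, rowProd, Finset.prod_congr rfl fun j hj => by rw [hexp j hj],
    prod_X_add_one_pow (suppM G i) (eExp p n k G i) fun j hj => by
      rw [eExp, if_neg (mt mem_suppM.2 hj)], Finset.filter_ne',
    Finset.sum_erase_eq_sub hzero]
  simp

theorem constantCoeff_rowProd (i : Fin k) : constantCoeff (rowProd p n k G i) = 1 := by
  simp [rowProd, map_prod]

theorem rowProd_mem_supported (i : Fin k) :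
    rowProd p n k G i ∈ supported (ZMod p) {v : Fin n | k ≤ (v : ℕ)} := by
  refine Subalgebra.prod_mem _ fun j hj => pow_mem (add_mem ?_ (one_mem _)) _
  exact Algebra.subset_adjoin ⟨j, (mem_suppM.1 hj).1, rfl⟩

theorem rowProd_sub_one_mem_idealOfVars (i : Fin k) :
    rowProd p n k G i - 1 ∈ idealOfVars (Fin n) (ZMod p) :=
  mem_idealOfVars_of_constantCoeff_eq_zero (by simp [constantCoeff_rowProd])

theorem codeIdeal'_eq_span [Fact p.Prime] :
    codeIdeal' p n k hkn G = Ideal.span ({f | ∃ i : Fin k, f = stdElt p n k hkn G i} ∪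
      {f | ∃ i : Fin n, k ≤ (i : ℕ) ∧ f = X i ^ p}) := by
  have hp : C ((p : ZMod p) - 1) = (-1 : MvPolynomial (Fin n) (ZMod p)) := by simp
  have hstd : ∀ i, (X (Fin.castLE hkn i) + 1) +
      C ((p : ZMod p) - 1) * ∏ j ∈ suppM G i, (X j + 1) ^ (p - (G i j).val) =
        stdElt p n k hkn G i := fun i => by
    rw [hp, stdElt_eq, rowProd]
    ring
  have hpow : ∀ j : Fin n, ((X j : MvPolynomial (Fin n) (ZMod p)) + 1) ^ p +
      C ((p : ZMod p) - 1) = X j ^ p := fun j => by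
    rw [hp, add_pow_char, one_pow, add_neg_cancel_right]
  simp only [codeIdeal', hstd, hpow]

end RowProd

section LeadIdeal

variable {p n k : ℕ} (hkn : k ≤ n)

variable (p n k) in
def leadIdeal : Ideal (MvPolynomial (Fin n) (ZMod p)) :=
  Ideal.span ({f | ∃ i : Fin k, f = X (Fin.castLE hkn i)} ∪
    {f | ∃ i : Fin n, k ≤ (i : ℕ) ∧ f = (X i : MvPolynomial (Fin n) (ZMod p)) ^ p})

variable (p k) in
def leadExp (v : Fin n) : ℕ := if (v : ℕ) < k then 1 else p

theorem leadIdeal_eq_span_monomial : leadIdeal p n k hkn =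
    Ideal.span ((monomial · 1) '' Set.range fun v => Finsupp.single v (leadExp p k v)) := by
  rw [leadIdeal]
  congr 1
  ext f
  simp only [Set.mem_union, Set.mem_ofPred_eq, Set.mem_image, Set.mem_range]
  constructor
  · rintro (⟨i, rfl⟩ | ⟨j, hj, rfl⟩)
    · exact ⟨_, ⟨Fin.castLE hkn i, rfl⟩, by simp [leadExp, X]⟩
    · exact ⟨_, ⟨j, rfl⟩, by simp [leadExp, not_lt.2 hj, X_pow_eq_monomial]⟩
  · rintro ⟨_, ⟨v, rfl⟩, rfl⟩
    by_cases hv : (v : ℕ) < k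
    · exact Or.inl ⟨⟨v, hv⟩, by simp [leadExp, hv, X]⟩
    · exact Or.inr ⟨v, not_lt.1 hv, by simp [leadExp, hv, X_pow_eq_monomial]⟩

theorem mem_leadIdeal_iff {f : MvPolynomial (Fin n) (ZMod p)} :
    f ∈ leadIdeal p n k hkn ↔ ∀ β ∈ f.support, ∃ v, leadExp p k v ≤ β v := by
  rw [leadIdeal_eq_span_monomial, mem_ideal_span_monomial_image]
  simp [Finsupp.single_le_iff]

end LeadIdeal

section CodeSubst

variable {p n k : ℕ} (hkn : k ≤ n) (G : Fin k → Fin n → ZMod p)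

variable (p n k) in
def codeSubst (v : Fin n) : MvPolynomial (Fin n) (ZMod p) :=
  if h : (v : ℕ) < k then rowProd p n k G ⟨v, h⟩ - 1 else X v

theorem codeSubst_of_le {v : Fin n} (hv : k ≤ (v : ℕ)) : codeSubst p n k G v = X v :=
  dif_neg (not_lt.2 hv)

theorem codeSubst_mem_idealOfVars (v : Fin n) :
    codeSubst p n k G v ∈ idealOfVars (Fin n) (ZMod p) := by
  unfold codeSubst
  split_ifs
  · exact rowProd_sub_one_mem_idealOfVars G _
  · exact Ideal.subset_span ⟨v, rfl⟩

theorem aeval_codeSubst_stdElt (i : Fin k) :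
    aeval (codeSubst p n k G) (stdElt p n k hkn G i) = 0 := by
  have hfix : aeval (codeSubst p n k G) (rowProd p n k G i) = rowProd p n k G i := by
    simp only [rowProd, map_prod, map_pow, map_add, map_one, aeval_X]
    exact Finset.prod_congr rfl fun j hj => by rw [codeSubst_of_le G (mem_suppM.1 hj).1]
  rw [stdElt_eq, map_sub, map_sub, map_one, hfix, aeval_X, codeSubst,
    dif_pos (show ((Fin.castLE hkn i : Fin n) : ℕ) < k from i.isLt)]
  exact sub_self _

theorem aeval_codeSubst_mem_leadIdeal [Fact p.Prime] {g : MvPolynomial (Fin n) (ZMod p)}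
    (hg : g ∈ codeIdeal' p n k hkn G) : aeval (codeSubst p n k G) g ∈ leadIdeal p n k hkn := by
  rw [codeIdeal'_eq_span] at hg
  refine (Ideal.span_le (I := (leadIdeal p n k hkn).comap (aeval (codeSubst p n k G)))).2 ?_ hg
  rintro _ (⟨i, rfl⟩ | ⟨j, hj, rfl⟩) <;> rw [SetLike.mem_coe, Ideal.mem_comap]
  · rw [aeval_codeSubst_stdElt]
    exact zero_mem _
  · rw [map_pow, aeval_X, codeSubst_of_le G hj]
    exact Ideal.subset_span (Or.inr ⟨j, hj, rfl⟩)

theorem exists_leadExp_le_of_isLeadMon [Fact p.Prime] {g : MvPolynomial (Fin n) (ZMod p)}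
    (hg : g ∈ codeIdeal' p n k hkn G) {α : Fin n →₀ ℕ} (hα : IsLeadMon negDegLexGt g α) :
    ∃ v, leadExp p k v ≤ α v := by
  by_contra! hlt
  have hα0 : ∀ v : Fin n, (v : ℕ) < k → α v = 0 := fun v hv => by
    simpa [leadExp, hv] using hlt v
  have hcoeff : coeff α (aeval (codeSubst p n k G) g) = coeff α g := by
    refine coeff_aeval_eq_coeff (codeSubst_mem_idealOfVars G) (fun β hβ => hα.degree_le hβ)
      fun β hβ hdeg v hv => codeSubst_of_le G (not_lt.1 fun hvk => ?_)
    exact Finsupp.mem_support_iff.1 hv (hα.eq_zero_of_degree_eq hα0 hβ hdeg v hvk)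
  have hαmem : α ∈ (aeval (codeSubst p n k G) g).support := by
    rw [mem_support_iff, hcoeff]
    exact mem_support_iff.1 hα.1
  obtain ⟨v, hv⟩ := (mem_leadIdeal_iff hkn).1 (aeval_codeSubst_mem_leadIdeal hkn G hg) α hαmem
  exact (hlt v).not_ge hv

end CodeSubst

section LeadingTerms

variable {p n k : ℕ} [Fact p.Prime] (hkn : k ≤ n) (G : Fin k → Fin n → ZMod p)

theorem monomial_mem_leadIdeal_of_isLeadMon {f : MvPolynomial (Fin n) (ZMod p)}
    (hf : algebraMap _ (Localization (unitSet n (ZMod p))) f ∈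
      (codeIdeal' p n k hkn G).map (algebraMap _ _))
    {α : Fin n →₀ ℕ} (hα : IsLeadMon negDegLexGt f α) (c : ZMod p) :
    monomial α c ∈ leadIdeal p n k hkn := by
  obtain ⟨s, hs, hsf⟩ :=
    (IsLocalization.algebraMap_mem_map_algebraMap_iff (unitSet n (ZMod p)) _ _ _).1 hf
  obtain ⟨v, hv⟩ := exists_leadExp_le_of_isLeadMon hkn G hsf
    (hα.mul_of_constantCoeff_eq_one (constantCoeff_eq_one_of_mem_unitSet hs))
  exact (mem_leadIdeal_iff hkn).2 fun β hβ =>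
    Finset.mem_singleton.1 (support_monomial_subset hβ) ▸ ⟨v, hv⟩

theorem leadIdeal_le_span_LTset : leadIdeal p n k hkn ≤
    Ideal.span (LTset ({f | ∃ i : Fin k, f = stdElt p n k hkn G i} ∪
      {f | ∃ i : Fin n, k ≤ (i : ℕ) ∧ f = X i ^ p})) := by
  refine Ideal.span_le.2 ?_
  rintro _ (⟨i, rfl⟩ | ⟨j, hj, rfl⟩) <;> refine Ideal.subset_span ?_
  · have hvars : {v : Fin n | k ≤ (v : ℕ)} ⊆ {v | Fin.castLE hkn i < v} := fun v hv =>
      Fin.lt_def.2 (lt_of_lt_of_le i.isLt hv)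
    have hsupp : rowProd p n k G i - 1 ∈ supported (ZMod p) {v | Fin.castLE hkn i < v} :=
      supported_mono hvars (sub_mem (rowProd_mem_supported G i) (one_mem _))
    obtain ⟨hlead, hcoeff⟩ := isLeadMon_X_sub (rowProd_sub_one_mem_idealOfVars G i) hsupp
    rw [← stdElt_eq] at hlead hcoeff
    exact ⟨_, Or.inl ⟨i, rfl⟩, _, hlead, by rw [hcoeff]; rfl⟩
  · refine ⟨_, Or.inr ⟨j, hj, rfl⟩, Finsupp.single j p, ?_, ?_⟩ <;> rw [X_pow_eq_monomial]
    · exact isLeadMon_monomial one_ne_zero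
    · rw [coeff_monomial, if_pos rfl]

end LeadingTerms

theorem standard_basis_code_ideal_general (p n k : ℕ) [Fact p.Prime] (hkn : k ≤ n)
    (G : Fin k → Fin n → ZMod p) :
    let Sset : Set (MvPolynomial (Fin n) (ZMod p)) :=
      {f | ∃ i : Fin k, f = stdElt p n k hkn G i} ∪
        {f | ∃ i : Fin n, k ≤ (i : ℕ) ∧ f = X i ^ p}
    let Loc := Localization (unitSet n (ZMod p))
    let I : Ideal Loc :=
      Ideal.map (algebraMap (MvPolynomial (Fin n) (ZMod p)) Loc) (codeIdeal' p n k hkn G)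
    let ltI : Ideal (MvPolynomial (Fin n) (ZMod p)) :=
      Ideal.span (LTset {f | algebraMap (MvPolynomial (Fin n) (ZMod p)) Loc f ∈ I ∧ f ≠ 0})
    (∀ f ∈ Sset, algebraMap (MvPolynomial (Fin n) (ZMod p)) Loc f ∈ I) ∧
    Ideal.span (LTset Sset) = ltI ∧
    ltI = Ideal.span ({f | ∃ i : Fin k, f = X (Fin.castLE hkn i)} ∪
      {f | ∃ i : Fin n, k ≤ (i : ℕ) ∧ f = (X i : MvPolynomial (Fin n) (ZMod p)) ^ p}) := by
  intro Sset Loc I ltI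
  have hSI : ∀ f ∈ Sset, algebraMap _ Loc f ∈ I := fun f hf =>
    Ideal.mem_map_of_mem _ (codeIdeal'_eq_span hkn G ▸ Ideal.subset_span hf)
  have hS_lt : Ideal.span (LTset Sset) ≤ ltI :=
    Ideal.span_mono (LTset_subset_LTset fun f hf hf0 => ⟨hSI f hf, hf0⟩)
  have hlt_lead : ltI ≤ leadIdeal p n k hkn := by
    refine Ideal.span_le.2 ?_
    rintro _ ⟨f, ⟨hfI, -⟩, α, hα, rfl⟩
    exact monomial_mem_leadIdeal_of_isLeadMon hkn G hfI hα _
  have hlead_S := leadIdeal_le_span_LTset hkn G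
  exact ⟨hSI, le_antisymm hS_lt (hlt_lead.trans hlead_S),
    le_antisymm hlt_lead (hlead_S.trans hS_lt)⟩

/-- The main theorem: `S = {A_i : 1 ≤ i ≤ k} ∪ {X_i^p : k+1 ≤ i ≤ n}` is a standard basis of
`I = I_C'·Loc_>(F_p[X])` with respect to the negative degree lexicographic order: its members
lie in `I`, their leading terms generate the leading-term ideal of `I`, and in particular that
leading-term ideal is `⟨X_1,...,X_k, X_{k+1}^p,...,X_n^p⟩`. -/
theorem standard_basis_code_ideal (p n k : ℕ) [Fact p.Prime] (hkn : k ≤ n)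
    (G : Fin k → Fin n → ZMod p)
    (hstd : ∀ i j : Fin k, G i (Fin.castLE hkn j) = if i = j then 1 else 0) :
    let Sset : Set (MvPolynomial (Fin n) (ZMod p)) :=
      {f | ∃ i : Fin k, f = stdElt p n k hkn G i} ∪
        {f | ∃ i : Fin n, k ≤ (i : ℕ) ∧ f = X i ^ p}
    let Loc := Localization (unitSet n (ZMod p))
    let I : Ideal Loc :=
      Ideal.map (algebraMap (MvPolynomial (Fin n) (ZMod p)) Loc) (codeIdeal' p n k hkn G)
    let ltI : Ideal (MvPolynomial (Fin n) (ZMod p)) :=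
      Ideal.span (LTset {f | algebraMap (MvPolynomial (Fin n) (ZMod p)) Loc f ∈ I ∧ f ≠ 0})
    (∀ f ∈ Sset, algebraMap (MvPolynomial (Fin n) (ZMod p)) Loc f ∈ I) ∧
    Ideal.span (LTset Sset) = ltI ∧
    ltI = Ideal.span ({f | ∃ i : Fin k, f = X (Fin.castLE hkn i)} ∪
      {f | ∃ i : Fin n, k ≤ (i : ℕ) ∧ f = (X i : MvPolynomial (Fin n) (ZMod p)) ^ p}) :=
  standard_basis_code_ideal_general p n k hkn G

end
end

section
/- (Mora weak normal form.) Let > be a local order on K[X_1,...,X_n] and f, f_1,...,f_s nonzero polynomials. Then there exist polynomials u, a_1,...,a_s, h ∈ K[X] with lt(u) = 1 (so u is a unit in Loc_>(K[X])) such that u·f = a_1 f_1 + ... + a_s f_s + h, where lt(f) ≥ lt(a_i)·lt(f_i) whenever a_i ≠ 0, and h = 0 or lt(h) is not divisible by any lt(f_i). -/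
open MvPolynomial

def IsSemigroupOrder {σ : Type*} (r : (σ →₀ ℕ) → (σ →₀ ℕ) → Prop) : Prop :=
  Transitive r ∧ (∀ a b, a ≠ b → r a b ∨ r b a) ∧ (∀ a b, r a b → ¬ r b a) ∧
    ∀ a b c, r a b → r (a + c) (b + c)

def IsLocalOrder {σ : Type*} (r : (σ →₀ ℕ) → (σ →₀ ℕ) → Prop) : Prop :=
  IsSemigroupOrder r ∧ ∀ i : σ, r 0 (Finsupp.single i 1)

/-!
Mora's algorithm. Start from `1 * f = 0 + f` and repeatedly cancel the leading term of the
remainder `h` against a monomial multiple of a reducer whose leading monomial divides `lt(h)`,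
chosen of minimal écart `deg - deg lt` among the `Fᵢ` and all earlier remainders. An earlier
remainder `h' = u' f - ∑ a'ᵢ Fᵢ` has a strictly larger leading monomial, so the multiplier is a
non-constant monomial and `u` keeps a nonzero constant term.

If the algorithm never stopped, the leading monomials would form an infinite strictly decreasing
sequence. When the chosen reducer has écart at most that of `h`, the degree of `h` does not grow;
at every other step `h` has smaller écart than each earlier remainder whose leading monomial
divides `lt(h)`, so by Dickson's lemma applied to the pairs `(lt h, écart h)` such steps are
finitely many. Afterwards the degrees are bounded, and only finitely many monomials remain
available for infinitely many distinct leading monomials.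
-/

section MonomialOrder

-- `r α β` reads `α > β`.
variable {σ : Type*} {r : (σ →₀ ℕ) → (σ →₀ ℕ) → Prop}

theorem IsSemigroupOrder.trans (hr : IsSemigroupOrder r) {a b c : σ →₀ ℕ} (hab : r a b)
    (hbc : r b c) : r a c :=
  hr.1 hab hbc

theorem IsSemigroupOrder.irrefl (hr : IsSemigroupOrder r) (a : σ →₀ ℕ) : ¬ r a a :=
  fun h => hr.2.2.1 a a h h

theorem IsSemigroupOrder.total (hr : IsSemigroupOrder r) {a b : σ →₀ ℕ} (h : a ≠ b) :
    r a b ∨ r b a :=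
  hr.2.1 a b h

theorem IsSemigroupOrder.add_right (hr : IsSemigroupOrder r) {a b : σ →₀ ℕ} (h : r a b)
    (c : σ →₀ ℕ) : r (a + c) (b + c) :=
  hr.2.2.2 a b c h

theorem IsSemigroupOrder.add_left (hr : IsSemigroupOrder r) {a b : σ →₀ ℕ} (h : r a b)
    (c : σ →₀ ℕ) : r (c + a) (c + b) := by
  simpa only [add_comm c] using hr.add_right h c

theorem IsSemigroupOrder.rel_or_eq_trans (hr : IsSemigroupOrder r) {a b c : σ →₀ ℕ}
    (hab : r a b ∨ a = b) (hbc : r b c ∨ b = c) : r a c ∨ a = c := by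
  rcases hab with hab | rfl
  · rcases hbc with hbc | rfl
    · exact .inl (hr.trans hab hbc)
    · exact .inl hab
  · exact hbc

theorem IsSemigroupOrder.isStrictOrder (hr : IsSemigroupOrder r) : IsStrictOrder (σ →₀ ℕ) r where
  irrefl := hr.irrefl
  trans _ _ _ := hr.trans

theorem IsLocalOrder.zero_rel (hr : IsLocalOrder r) {γ : σ →₀ ℕ} (hγ : γ ≠ 0) : r 0 γ := by
  have hadd : ∀ a b : σ →₀ ℕ, r 0 a → r 0 b → r 0 (a + b) := fun a b ha hb =>
    hr.1.trans ha (by simpa using hr.1.add_left hb a)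
  suffices ∀ γ : σ →₀ ℕ, γ = 0 ∨ r 0 γ from (this γ).resolve_left hγ
  intro γ
  induction γ using Finsupp.induction_linear with
  | zero => exact .inl rfl
  | add a b ha hb =>
    rcases ha with rfl | ha
    · simpa using hb
    rcases hb with rfl | hb
    · simpa using .inr ha
    exact .inr (hadd a b ha hb)
  | single i k =>
    induction k with
    | zero => simp
    | succ k ih =>
      rw [Finsupp.single_add]
      rcases ih with h | h
      · simpa [h] using hr.2 i
      · exact .inr (hadd _ _ h (hr.2 i))

theorem IsLocalOrder.rel_add_or_eq (hr : IsLocalOrder r) (γ α : σ →₀ ℕ) :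
    r α (γ + α) ∨ α = γ + α := by
  rcases eq_or_ne γ 0 with rfl | hγ
  · simp
  · have := hr.1.add_right (hr.zero_rel hγ) α
    rw [zero_add] at this
    exact .inl this

end MonomialOrder

section LeadingMonomial

variable {σ R : Type*} [CommSemiring R] {r : (σ →₀ ℕ) → (σ →₀ ℕ) → Prop}
  {p : MvPolynomial σ R} {α β : σ →₀ ℕ}

theorem MvPolynomial.degree_le_totalDegree_of_mem_support (h : α ∈ p.support) :
    α.degree ≤ p.totalDegree :=
  le_totalDegree h

theorem IsLeadMon.ne_zero (h : IsLeadMon r p α) : p ≠ 0 := by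
  rintro rfl
  simpa using h.1

theorem IsLeadMon.unique (hr : IsSemigroupOrder r) (hα : IsLeadMon r p α)
    (hβ : IsLeadMon r p β) : α = β := by
  by_contra hne
  exact hr.irrefl α (hr.trans (hα.2 β hβ.1 (Ne.symm hne)) (hβ.2 α hα.1 hne))

theorem IsSemigroupOrder.exists_isLeadMon (hr : IsSemigroupOrder r) (hp : p ≠ 0) :
    ∃ α, IsLeadMon r p α := by
  have := hr.isStrictOrder
  have hwf := Set.wellFoundedOn_iff.1 (p.support.finite_toSet.wellFoundedOn (r := r))
  obtain ⟨α, hα, hmin⟩ :=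
    hwf.has_min p.support (Finset.nonempty_iff_ne_empty.2 (mt support_eq_empty.1 hp))
  exact ⟨α, hα, fun β hβ hne => (hr.total hne).resolve_left fun h => hmin β hβ ⟨h, hβ, hα⟩⟩

theorem IsLocalOrder.isLeadMon_zero (hr : IsLocalOrder r) (h : coeff 0 p ≠ 0) :
    IsLeadMon r p 0 :=
  ⟨mem_support_iff.2 h, fun _ _ hβ => hr.zero_rel hβ⟩

end LeadingMonomial

namespace Mora

section Lead

variable {σ R : Type*} [CommSemiring R] (r : (σ →₀ ℕ) → (σ →₀ ℕ) → Prop)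

-- An arbitrary monomial when `p = 0`.
noncomputable def lead (p : MvPolynomial σ R) : σ →₀ ℕ :=
  Classical.epsilon (IsLeadMon r p)

noncomputable def ecart (p : MvPolynomial σ R) : ℕ :=
  p.totalDegree - (lead r p).degree

def SupportLE (α : σ →₀ ℕ) (p : MvPolynomial σ R) : Prop :=
  ∀ β ∈ p.support, r α β ∨ α = β

def IsReduced {ι : Type*} (F : ι → MvPolynomial σ R) (h : MvPolynomial σ R) : Prop :=
  h = 0 ∨ ∃ γ, IsLeadMon r h γ ∧ ∀ i, ∀ δ, IsLeadMon r (F i) δ → ¬ δ ≤ γ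

variable {r} {p : MvPolynomial σ R} {α β : σ →₀ ℕ}

theorem isLeadMon_lead (hr : IsSemigroupOrder r) (hp : p ≠ 0) : IsLeadMon r p (lead r p) :=
  Classical.epsilon_spec (hr.exists_isLeadMon hp)

theorem _root_.IsLeadMon.lead_eq (hr : IsSemigroupOrder r) (h : IsLeadMon r p α) : lead r p = α :=
  (isLeadMon_lead hr h.ne_zero).unique hr h

theorem _root_.IsLeadMon.supportLE (h : IsLeadMon r p α) : SupportLE r α p := fun β hβ =>
  (eq_or_ne β α).elim (fun h => .inr h.symm) fun hne => .inl (h.2 β hβ hne)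

theorem SupportLE.mono (hr : IsSemigroupOrder r) (hp : SupportLE r α p) (hβα : r β α ∨ β = α) :
    SupportLE r β p := fun γ hγ =>
  hr.rel_or_eq_trans hβα (hp γ hγ)

theorem SupportLE.monomial_mul (hr : IsSemigroupOrder r) {δ : σ →₀ ℕ} (hp : SupportLE r δ p)
    (γ : σ →₀ ℕ) (c : R) : SupportLE r (γ + δ) (monomial γ c * p) := by
  intro β hβ
  rw [mem_support_iff, coeff_monomial_mul'] at hβ
  split_ifs at hβ with hγβ
  · rw [← add_tsub_cancel_of_le hγβ]
    rcases hp (β - γ) (mem_support_iff.2 (right_ne_zero_of_mul hβ)) with h | h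
    · exact .inl (hr.add_left h γ)
    · exact .inr (congrArg (γ + ·) h)
  · exact absurd rfl hβ

theorem SupportLE.sub {R : Type*} [CommRing R] {p q : MvPolynomial σ R}
    (hp : SupportLE r α p) (hq : SupportLE r α q) : SupportLE r α (p - q) := by
  classical
  intro β hβ
  rcases Finset.mem_union.1 (support_sub σ p q hβ) with h | h
  exacts [hp β h, hq β h]

end Lead

section Reduction

variable {σ K : Type*} [Field K] {r : (σ →₀ ℕ) → (σ →₀ ℕ) → Prop}

variable (r) in
noncomputable def reductionTerm (g p : MvPolynomial σ K) : MvPolynomial σ K :=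
  monomial (lead r p - lead r g) (coeff (lead r p) p / coeff (lead r g) g)

variable {p g : MvPolynomial σ K}

theorem rel_lead_of_mem_support_sub_reductionTerm_mul (hr : IsSemigroupOrder r) (hp : p ≠ 0)
    (hg : g ≠ 0) (hle : lead r g ≤ lead r p) {β : σ →₀ ℕ}
    (hβ : β ∈ (p - reductionTerm r g p * g).support) : r (lead r p) β := by
  classical
  have hsum : lead r p - lead r g + lead r g = lead r p := tsub_add_cancel_of_le hle
  have hcoeff : coeff (lead r p) (reductionTerm r g p * g) = coeff (lead r p) p := by
    nth_rewrite 1 [← hsum]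
    rw [reductionTerm, coeff_monomial_mul,
      div_mul_cancel₀ _ (mem_support_iff.1 (isLeadMon_lead hr hg).1)]
  have hne : β ≠ lead r p := by
    rintro rfl
    simp [coeff_sub, hcoeff] at hβ
  rcases Finset.mem_union.1 (support_sub σ _ _ hβ) with h | h
  · exact (isLeadMon_lead hr hp).2 β h hne
  · have := (isLeadMon_lead hr hg).supportLE.monomial_mul hr _ _ β h
    rw [hsum] at this
    exact this.resolve_right hne.symm

theorem totalDegree_sub_reductionTerm_mul_le (hr : IsSemigroupOrder r) (hp : p ≠ 0) (hg : g ≠ 0)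
    (hle : lead r g ≤ lead r p) (he : ecart r g ≤ ecart r p) :
    (p - reductionTerm r g p * g).totalDegree ≤ p.totalDegree := by
  have hα := degree_le_totalDegree_of_mem_support (isLeadMon_lead hr hp).1
  have hδ := degree_le_totalDegree_of_mem_support (isLeadMon_lead hr hg).1
  have hγ : (lead r p - lead r g).degree + (lead r g).degree = (lead r p).degree := by
    rw [← map_add, tsub_add_cancel_of_le hle]
  have ht : (reductionTerm r g p * g).totalDegree ≤ (lead r p - lead r g).degree + g.totalDegree :=
    (totalDegree_mul _ _).trans (Nat.add_le_add_right (totalDegree_monomial_le _ _) _)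
  unfold ecart at he
  exact (totalDegree_sub _ _).trans (max_le le_rfl (by omega))

end Reduction

section Representation

variable {σ ι K : Type*} [Fintype ι] [Field K] {r : (σ →₀ ℕ) → (σ →₀ ℕ) → Prop}

variable (f : MvPolynomial σ K) (F : ι → MvPolynomial σ K) in
structure Rep where
  u : MvPolynomial σ K
  a : ι → MvPolynomial σ K
  h : MvPolynomial σ K
  spec : u * f = ∑ i, a i * F i + h

variable {f : MvPolynomial σ K} {F : ι → MvPolynomial σ K}

variable (r) in
structure Rep.Admissible (ρ : Rep f F) : Prop where
  coeff_zero_u : coeff 0 ρ.u ≠ 0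
  supportLE_a : ∀ i, SupportLE r (lead r f) (ρ.a i * F i)
  supportLE_h : SupportLE r (lead r f) ρ.h

-- `Fᵢ` as the representation `0 * f = -Fᵢ + Fᵢ`, so that reducing by `Fᵢ` is a special case of
-- reducing by an earlier remainder.
variable (f F) in
noncomputable def Rep.ofGen [DecidableEq ι] (i : ι) : Rep f F :=
  ⟨0, Pi.single i (-1), F i, by simp [Pi.single_apply]⟩

variable (r) in
noncomputable def Rep.reduce (ρ τ : Rep f F) : Rep f F where
  u := ρ.u - reductionTerm r τ.h ρ.h * τ.u
  a i := ρ.a i - reductionTerm r τ.h ρ.h * τ.a i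
  h := ρ.h - reductionTerm r τ.h ρ.h * τ.h
  spec := by
    simp only [sub_mul, Finset.sum_sub_distrib, mul_assoc, ← Finset.mul_sum]
    linear_combination ρ.spec - reductionTerm r τ.h ρ.h * τ.spec

theorem Rep.Admissible.isLeadMon_u (hr : IsLocalOrder r) {ρ : Rep f F} (hρ : ρ.Admissible r) :
    IsLeadMon r ρ.u 0 :=
  hr.isLeadMon_zero hρ.coeff_zero_u

theorem Rep.Admissible.exists_isLeadMon_mul (hr : IsSemigroupOrder r) (hf : f ≠ 0)
    (hF : ∀ i, F i ≠ 0) {ρ : Rep f F} (hρ : ρ.Admissible r) (i : ι) (hi : ρ.a i ≠ 0) :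
    ∃ α β, IsLeadMon r f α ∧ IsLeadMon r (ρ.a i * F i) β ∧ (r α β ∨ α = β) :=
  have hlead := isLeadMon_lead hr (mul_ne_zero hi (hF i))
  ⟨_, _, isLeadMon_lead hr hf, hlead, hρ.supportLE_a i _ hlead.1⟩

theorem Rep.Admissible.reduce (hr : IsSemigroupOrder r) {ρ τ : Rep f F} (hρ : ρ.Admissible r)
    (hρ0 : ρ.h ≠ 0) (hτ0 : τ.h ≠ 0) (hle : lead r τ.h ≤ lead r ρ.h)
    (hu : coeff 0 (reductionTerm r τ.h ρ.h * τ.u) = 0)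
    (ha : ∀ i, SupportLE r (lead r f) (reductionTerm r τ.h ρ.h * (τ.a i * F i))) :
    (ρ.reduce r τ).Admissible r where
  coeff_zero_u := by simpa [Rep.reduce, hu] using hρ.coeff_zero_u
  supportLE_a i := by
    simpa only [Rep.reduce, sub_mul, mul_assoc] using (hρ.supportLE_a i).sub (ha i)
  supportLE_h β hβ := hr.rel_or_eq_trans
    (hρ.supportLE_h _ (isLeadMon_lead hr hρ0).1)
    (.inl (rel_lead_of_mem_support_sub_reductionTerm_mul hr hρ0 hτ0 hle hβ))

theorem Rep.Admissible.reduce_ofGen [DecidableEq ι] (hr : IsSemigroupOrder r) {ρ : Rep f F}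
    (hρ : ρ.Admissible r) (hρ0 : ρ.h ≠ 0) {i : ι} (hFi : F i ≠ 0)
    (hle : lead r (F i) ≤ lead r ρ.h) : (ρ.reduce r (Rep.ofGen f F i)).Admissible r := by
  refine hρ.reduce hr hρ0 hFi hle (by simp [Rep.ofGen]) fun j => ?_
  have hgen : SupportLE r (lead r (F i)) ((Rep.ofGen f F i).a j * F j) := by
    rcases eq_or_ne j i with rfl | hji
    · simpa [Rep.ofGen, SupportLE] using (isLeadMon_lead hr hFi).supportLE
    · simp [Rep.ofGen, hji, SupportLE]
  have := hgen.monomial_mul hr (lead r ρ.h - lead r (F i))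
    (coeff (lead r ρ.h) ρ.h / coeff (lead r (F i)) (F i))
  rw [tsub_add_cancel_of_le hle] at this
  exact this.mono hr (hρ.supportLE_h _ (isLeadMon_lead hr hρ0).1)

theorem Rep.Admissible.reduce_of_rel (hr : IsLocalOrder r) {ρ τ : Rep f F}
    (hρ : ρ.Admissible r) (hρ0 : ρ.h ≠ 0) (hτ : τ.Admissible r) (hτ0 : τ.h ≠ 0)
    (hle : lead r τ.h ≤ lead r ρ.h) (hrel : r (lead r τ.h) (lead r ρ.h)) :
    (ρ.reduce r τ).Admissible r := by
  have hγ : lead r ρ.h - lead r τ.h ≠ 0 := fun h0 =>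
    hr.1.irrefl _ (le_antisymm hle (tsub_eq_zero_iff_le.1 h0) ▸ hrel)
  refine hρ.reduce hr.1 hρ0 hτ0 hle (by simp [reductionTerm, coeff_monomial_mul', hγ]) fun i => ?_
  exact ((hτ.supportLE_a i).monomial_mul hr.1 _ _).mono hr.1 (hr.rel_add_or_eq _ _)

end Representation

section Termination

variable {σ : Type*} [Finite σ]

theorem exists_forall_ge_le_of_ecart_lt (α : ℕ → σ →₀ ℕ) (D : ℕ → ℕ)
    (hstep : ∀ k, D (k + 1) ≤ D k ∨
      ∀ j < k, α j ≤ α k → D k - (α k).degree < D j - (α j).degree) :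
    ∃ N, ∀ k ≥ N, D (k + 1) ≤ D k := by
  by_contra! hbad
  obtain ⟨φ, hφ, hφbad⟩ := Nat.exists_strictMono_subsequence fun N => hbad (N + 1)
  obtain ⟨i, j, hij, hle⟩ := wellQuasiOrdered_le fun m => (α (φ m), D (φ m) - (α (φ m)).degree)
  have := (hstep (φ j)).resolve_left (hφbad j).not_ge (φ i) (hφ hij) hle.1
  exact this.not_ge hle.2

theorem not_injective_of_le_or_ecart_lt (α : ℕ → σ →₀ ℕ) (D : ℕ → ℕ)
    (hαD : ∀ k, (α k).degree ≤ D k)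
    (hstep : ∀ k, D (k + 1) ≤ D k ∨
      ∀ j < k, α j ≤ α k → D k - (α k).degree < D j - (α j).degree) :
    ¬ Function.Injective α := by
  intro hα
  obtain ⟨N, hN⟩ := exists_forall_ge_le_of_ecart_lt α D hstep
  have hD : ∀ k, D (N + k) ≤ D N := by
    intro k
    induction k with
    | zero => rfl
    | succ k ih => exact (hN (N + k) (by omega)).trans ih
  exact (Finsupp.finite_of_degree_le (D N)).not_infinite <|
    Set.infinite_of_injective_forall_mem (hα.comp (add_right_injective N))
      fun k => (hαD _).trans (hD k)

end Termination

section Algorithm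

variable {σ ι K : Type*} [Fintype ι] [Field K]
  {r : (σ →₀ ℕ) → (σ →₀ ℕ) → Prop} {f : MvPolynomial σ K} {F : ι → MvPolynomial σ K}

-- `past` holds the earlier remainders, which may serve as reducers.
variable (f F) in
structure MoraState where
  cur : Rep f F
  past : Set (Rep f F)

variable (r) in
structure MoraState.Inv (x : MoraState f F) : Prop where
  admissible : x.cur.Admissible r
  ne_zero : x.cur.h ≠ 0
  past : ∀ τ ∈ x.past, τ.Admissible r ∧ τ.h ≠ 0 ∧ r (lead r τ.h) (lead r x.cur.h)

variable (r) in
def MoraState.Next (x y : MoraState f F) : Prop :=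
  r (lead r x.cur.h) (lead r y.cur.h) ∧ y.past = insert x.cur x.past ∧
    (y.cur.h.totalDegree ≤ x.cur.h.totalDegree ∨
      ∀ τ ∈ x.past, lead r τ.h ≤ lead r x.cur.h → ecart r x.cur.h < ecart r τ.h)

variable (r) in
def MoraState.reducers [DecidableEq ι] (x : MoraState f F) : Set (Rep f F) :=
  {τ | τ.h ≠ 0 ∧ lead r τ.h ≤ lead r x.cur.h ∧ (τ ∈ Set.range (Rep.ofGen f F) ∨ τ ∈ x.past)}

variable (f F) in
noncomputable def MoraState.init : MoraState f F :=
  ⟨⟨1, 0, f, by simp⟩, ∅⟩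

theorem MoraState.inv_init (hr : IsSemigroupOrder r) (hf : f ≠ 0) : (MoraState.init f F).Inv r where
  admissible :=
    { coeff_zero_u := by simp [MoraState.init]
      supportLE_a := by simp [MoraState.init, SupportLE]
      supportLE_h := (isLeadMon_lead hr hf).supportLE }
  ne_zero := hf
  past := by simp [MoraState.init]

theorem MoraState.reducers_nonempty [DecidableEq ι] (hr : IsSemigroupOrder r) {x : MoraState f F}
    (hx : ¬ IsReduced r F x.cur.h) : (x.reducers r).Nonempty := by
  simp only [IsReduced, not_or, not_exists, not_and, not_forall, not_not] at hx
  obtain ⟨i, δ, hδ, hle⟩ := hx.2 _ (isLeadMon_lead hr hx.1)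
  exact ⟨Rep.ofGen f F i, hδ.ne_zero, hδ.lead_eq hr ▸ hle, .inl ⟨i, rfl⟩⟩

theorem MoraState.Inv.admissible_reduce [DecidableEq ι] (hr : IsLocalOrder r) {x : MoraState f F}
    (hx : x.Inv r) {τ : Rep f F} (hτ : τ ∈ x.reducers r) :
    (x.cur.reduce r τ).Admissible r := by
  obtain ⟨hτ0, hle, ⟨i, rfl⟩ | hpast⟩ := hτ
  · exact hx.admissible.reduce_ofGen hr.1 hx.ne_zero hτ0 hle
  · obtain ⟨hτ, -, hrel⟩ := hx.past τ hpast
    exact hx.admissible.reduce_of_rel hr hx.ne_zero hτ hτ0 hle hrel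

theorem MoraState.Inv.exists_next [DecidableEq ι] (hr : IsLocalOrder r)
    (hirred : ∀ ρ : Rep f F, ρ.Admissible r → ¬ IsReduced r F ρ.h) {x : MoraState f F}
    (hx : x.Inv r) : ∃ y, y.Inv r ∧ x.Next r y := by
  obtain ⟨τ, hτ, hmin⟩ := (measure fun υ : Rep f F => ecart r υ.h).wf.has_min _
    (MoraState.reducers_nonempty hr.1 (hirred _ hx.admissible))
  have hρ := hx.admissible_reduce hr hτ
  have hρ0 : (x.cur.reduce r τ).h ≠ 0 := fun h0 => hirred _ hρ (.inl h0)
  have hlt : r (lead r x.cur.h) (lead r (x.cur.reduce r τ).h) :=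
    rel_lead_of_mem_support_sub_reductionTerm_mul hr.1 hx.ne_zero hτ.1 hτ.2.1
      (isLeadMon_lead hr.1 hρ0).1
  refine ⟨⟨x.cur.reduce r τ, insert x.cur x.past⟩, ⟨hρ, hρ0, ?_⟩, hlt, rfl, ?_⟩
  · rintro υ (rfl | hυ)
    · exact ⟨hx.admissible, hx.ne_zero, hlt⟩
    · obtain ⟨hυ, hυ0, hrel⟩ := hx.past υ hυ
      exact ⟨hυ, hυ0, hr.1.trans hrel hlt⟩
  · by_cases he : ecart r τ.h ≤ ecart r x.cur.h
    · exact .inl (totalDegree_sub_reductionTerm_mul_le hr.1 hx.ne_zero hτ.1 hτ.2.1 he)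
    · refine .inr fun υ hυ hle => ?_
      have : ¬ ecart r υ.h < ecart r τ.h := hmin υ ⟨(hx.past υ hυ).2.1, hle, .inr hυ⟩
      omega

theorem MoraState.wellFounded_next [Finite σ] (hr : IsSemigroupOrder r) :
    WellFounded fun y x : MoraState f F => x.Inv r ∧ x.Next r y := by
  refine wellFounded_iff_isEmpty_descending_chain.2 ⟨fun ⟨g, hg⟩ => ?_⟩
  have := hr.isStrictOrder
  have hrel : ∀ j k, j < k → r (lead r (g j).cur.h) (lead r (g k).cur.h) :=
    Nat.rel_of_forall_rel_succ_of_lt r (f := fun k => lead r (g k).cur.h) fun k => (hg k).2.1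
  have hmem : ∀ j k, j < k → (g j).cur ∈ (g k).past := by
    intro j k hjk
    induction k with
    | zero => omega
    | succ k ih =>
      rw [(hg k).2.2.1]
      rcases Nat.lt_succ_iff_lt_or_eq.1 hjk with h | rfl
      exacts [Set.mem_insert_of_mem _ (ih h), Set.mem_insert _ _]
  refine not_injective_of_le_or_ecart_lt (fun k => lead r (g k).cur.h)
    (fun k => (g k).cur.h.totalDegree)
    (fun k => degree_le_totalDegree_of_mem_support (isLeadMon_lead hr (hg k).1.ne_zero).1)
    (fun k => (hg k).2.2.2.imp id fun h j hjk hle => h _ (hmem j k hjk) hle) ?_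
  intro j k (hjk : lead r (g j).cur.h = lead r (g k).cur.h)
  by_contra hne
  rcases Nat.lt_or_gt_of_ne hne with h | h
  · exact hr.irrefl _ (hjk ▸ hrel j k h)
  · exact hr.irrefl _ (hjk ▸ hrel k j h)

end Algorithm

end Mora

/-- Mora's weak normal form: for a local order `r` and nonzero polynomials
`f, f₁, ..., f_s` there are `u, a₁, ..., a_s, h` with `lt(u) = 1` (i.e. `0` is the leading
monomial of `u`, so `u` is a unit in `Loc_>(K[X])`) such that `u·f = ∑ aᵢ·fᵢ + h`,
`lm(f) ≥ lm(aᵢ·fᵢ)` whenever `aᵢ ≠ 0`, and `h = 0` or `lm(h)` is not divisible by any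
`lm(fᵢ)`. -/
theorem mora_weak_normal_form {n s : ℕ} {K : Type*} [Field K]
    (r : (Fin n →₀ ℕ) → (Fin n →₀ ℕ) → Prop) (hr : IsLocalOrder r)
    (f : MvPolynomial (Fin n) K) (hf : f ≠ 0)
    (F : Fin s → MvPolynomial (Fin n) K) (hF : ∀ i, F i ≠ 0) :
    ∃ (u h : MvPolynomial (Fin n) K) (a : Fin s → MvPolynomial (Fin n) K),
      IsLeadMon r u 0 ∧
      u * f = (∑ i, a i * F i) + h ∧
      (∀ i, a i ≠ 0 → ∃ α β, IsLeadMon r f α ∧ IsLeadMon r (a i * F i) β ∧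
        (r α β ∨ α = β)) ∧
      (h = 0 ∨ ∃ γ, IsLeadMon r h γ ∧
        ∀ i, ∀ δ, IsLeadMon r (F i) δ → ¬ δ ≤ γ) := by
  by_contra hnf
  have hirred : ∀ ρ : Mora.Rep f F, ρ.Admissible r → ¬ Mora.IsReduced r F ρ.h :=
    fun ρ hρ hred => hnf ⟨ρ.u, ρ.h, ρ.a, hρ.isLeadMon_u hr, ρ.spec,
      hρ.exists_isLeadMon_mul hr.1 hf hF, hred⟩
  obtain ⟨x, hx, hmin⟩ := (Mora.MoraState.wellFounded_next (f := f) (F := F) hr.1).has_min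
    {x | x.Inv r} ⟨_, Mora.MoraState.inv_init hr.1 hf⟩
  obtain ⟨y, hy, hxy⟩ := Mora.MoraState.Inv.exists_next hr hirred hx
  exact hmin y hy ⟨hx, hxy⟩
end
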